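/- arXiv:math/0503001 — 4 statements merged into one kernel-verified Lean document; each statement's English description precedes it below -/
import Mathlib

section
/- A group is never equal to a finite union of cosets of subgroups of infinite index. Equivalently: if G is a group and H_1,...,H_n are subgroups each of infinite index in G, and g_1,...,g_n are elements of G, then the union of the cosets g_1 H_1, ..., g_n H_n is not all of G. -/
open scoped Pointwise

/-- B.H. Neumann's theorem: a group is never the union of finitely many
cosets of subgroups of infinite index. -/
theorem neumann_coset_cover (G : Type*) [Group G] (n : ℕ)
    (H : Fin n → Subgroup G) (hH : ∀ i, (H i).index = 0)
    (g : Fin n → G) :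
    (⋃ i, (g i) • ((H i : Set G))) ≠ Set.univ := by
  intro hcovers
  have hcovers' : ⋃ i ∈ (Finset.univ : Finset (Fin n)), (g i) • ((H i : Set G)) = Set.univ := by
    simpa using hcovers
  obtain ⟨k, -, hk⟩ := Subgroup.exists_finiteIndex_of_leftCoset_cover hcovers'
  exact hk.index_ne_zero (hH k)
end

section
/- Let a group N act on a set M such that every orbit of N on M is infinite. Then for every two finite subsets S, T ⊆ M there exists an element n ∈ N such that n·S ∩ T = ∅. -/
/-!
If `n • S` met `T` for every `n`, the group would be covered by the finitely many sets
`{n | n • s = t}` with `s ∈ S`, `t ∈ T`, each empty or a left coset of the stabilizer of `s`.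
By B. H. Neumann's lemma one of these stabilizers would have finite index, i.e. the orbit of
some `s` would be finite.
-/

open scoped Pointwise

namespace MulAction

variable {G α : Type*} [Group G] [MulAction G α]

theorem mem_smul_stabilizer_iff {g n : G} {a : α} :
    n ∈ g • (stabilizer G a : Set G) ↔ n • a = g • a := by
  rw [mem_leftCoset_iff, SetLike.mem_coe, mem_stabilizer_iff, mul_smul, inv_smul_eq_iff]

theorem exists_setOf_smul_eq_subset_smul_stabilizer (a b : α) :
    ∃ g : G, {n : G | n • a = b} ⊆ g • (stabilizer G a : Set G) := by
  by_cases hb : ∃ g : G, g • a = b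
  · obtain ⟨g, rfl⟩ := hb
    exact ⟨g, fun n hn => mem_smul_stabilizer_iff.mpr hn⟩
  · exact ⟨1, fun n hn => (hb ⟨n, hn⟩).elim⟩

theorem finite_orbit_of_finiteIndex_stabilizer (a : α) [(stabilizer G a).FiniteIndex] :
    (orbit G a).Finite :=
  Set.finite_coe_iff.mp (.of_equiv _ (orbitEquivQuotientStabilizer G a).symm)

theorem exists_forall_smul_notMem_of_orbit_infinite {S T : Finset α}
    (hS : ∀ s ∈ S, (orbit G s).Infinite) : ∃ n : G, ∀ s ∈ S, n • s ∉ T := by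
  by_contra! hmeets
  choose g hg using fun p : α × α => exists_setOf_smul_eq_subset_smul_stabilizer (G := G) p.1 p.2
  have hcovers : ⋃ p ∈ S ×ˢ T, g p • (stabilizer G p.1 : Set G) = Set.univ := by
    refine Set.eq_univ_of_forall fun n => ?_
    obtain ⟨s, hs, ht⟩ := hmeets n
    exact Set.mem_biUnion (Finset.mk_mem_product hs ht) (hg (s, n • s) rfl)
  obtain ⟨p, hp, hfin⟩ := Subgroup.exists_finiteIndex_of_leftCoset_cover hcovers
  exact hS p.1 (Finset.mem_product.mp hp).1 (finite_orbit_of_finiteIndex_stabilizer p.1)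

end MulAction

/-- If every orbit of a group action is infinite, then for any two finite
subsets `S T` of the space there is a group element moving `S` off `T`. -/
theorem exists_translate_disjoint_of_orbits_infinite
    (N : Type*) [Group N] (M : Type*) [MulAction N M]
    (h : ∀ x : M, (MulAction.orbit N x).Infinite)
    (S T : Finset M) :
    ∃ n : N, ∀ s ∈ S, n • s ∉ T :=
  MulAction.exists_forall_smul_notMem_of_orbit_infinite fun s _ => h s
end

section
/- A finitely generated group Γ is primitive if and only if it contains a proper prodense subgroup. More precisely: if Γ is finitely generated and Δ ≤ Γ is a proper prodense subgroup, then Δ is contained in a maximal proper subgroup M of Γ, and the action of Γ on Γ/M is faithful and primitive. -/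
/-!
A finitely generated group has compact top element in its subgroup lattice, so every proper
subgroup lies in a maximal one. If `M ⊇ Δ` is maximal, the normal core of `M` is a normal subgroup
inside `M`; were it nontrivial, prodensity would give `Γ = Δ ⊔ core M ≤ M`.
-/

open CompleteLattice

namespace Subgroup

variable {G : Type*} [Group G]

def IsProdense (Δ : Subgroup G) : Prop :=
  ∀ N : Subgroup G, N.Normal → N ≠ ⊥ → Δ ⊔ N = ⊤

theorem IsProdense.normalCore_eq_bot {Δ H : Subgroup G} (hΔ : Δ.IsProdense) (hle : Δ ≤ H)
    (hH : H ≠ ⊤) : H.normalCore = ⊥ := by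
  by_contra hcore
  have hsup : Δ ⊔ H.normalCore ≤ H := sup_le hle H.normalCore_le
  rw [hΔ _ H.normalCore_normal hcore] at hsup
  exact hH (top_le_iff.1 hsup)

theorem isCompactElement_closure_singleton (g : G) : IsCompactElement (closure {g}) := by
  rw [isCompactElement_iff_le_of_directed_sSup_le]
  intro s hne hdir hle
  obtain ⟨H, hH, hg⟩ := (mem_sSup_of_directedOn hne hdir).1 (hle (subset_closure rfl))
  exact ⟨H, hH, (closure_le H).2 (Set.singleton_subset_iff.2 hg)⟩

theorem closure_finset_eq_sup (S : Finset G) :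
    closure (S : Set G) = S.sup fun g => closure {g} := by
  rw [Finset.sup_eq_iSup]
  simp_rw [← closure_iUnion]
  congr 1
  ext
  simp

theorem FG.isCompactElement {P : Subgroup G} (hP : P.FG) : IsCompactElement P := by
  obtain ⟨S, rfl⟩ := hP
  rw [closure_finset_eq_sup]
  exact isCompactElement_finsetSup S fun g _ => isCompactElement_closure_singleton g

end Subgroup

instance Group.FG.isCoatomic_subgroup {G : Type*} [Group G] [Group.FG G] :
    IsCoatomic (Subgroup G) :=
  coatomic_of_top_compact (Group.fg_def.1 ‹_›).isCompactElement

/-- If `Γ` is finitely generated and `Δ` is a proper prodense subgroup, then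
`Δ` is contained in a maximal proper subgroup `M` with trivial normal core, so
that the action of `Γ` on `Γ ⧸ M` is faithful and primitive. -/
theorem prodense_le_maximal_core_free
    (Γ : Type*) [Group Γ] (hfg : Group.FG Γ)
    (Δ : Subgroup Γ) (hΔtop : Δ ≠ ⊤)
    (hΔ : ∀ N : Subgroup Γ, N.Normal → N ≠ ⊥ → Δ ⊔ N = ⊤) :
    ∃ M : Subgroup Γ, Δ ≤ M ∧ IsCoatom M ∧ M.normalCore = ⊥ := by
  obtain ⟨M, hM, hΔM⟩ := (eq_top_or_exists_le_coatom Δ).resolve_left hΔtop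
  exact ⟨M, hΔM, hM, Subgroup.IsProdense.normalCore_eq_bot hΔ hΔM hM.1⟩
end

section
/- Infinite ping-pong lemma: let a group G act on a set X, and let (g_i) be a (finite or countable) family of elements of G equipped with subsets A_i^+, R_i^+, A_i^-, R_i^- of X such that: (a) A_i^+ ∩ (A_i^- ∪ R_i^+) = ∅ and A_i^- ∩ (A_i^+ ∪ R_i^-) = ∅ for each i; (b) A_i^± ∩ (A_j^± ∪ R_j^±) = ∅ for all i ≠ j and all sign choices; (c) g_i·(X \ R_i^+) ⊆ A_i^+ and g_i^{-1}·(X \ R_i^-) ⊆ A_i^-. If moreover X is not covered by the union of all these sets (there is a point outside all of them), then the elements g_i freely generate a free subgroup of G. -/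
/-!
Ping-pong: write a nontrivial element of the free group as a reduced word `s₁ s₂ ⋯ sₙ` in the
letters `g i` and `(g i)⁻¹`, and let it act on a point `x₀` outside all the given sets. Reading
the word from the right, each letter moves the current point into its attracting set; since the
word is reduced, that point is outside the repelling set of the next letter, so the next letter
moves it into its own attracting set. Hence the word sends `x₀` into the attracting set of `s₁`,
which does not contain `x₀`, so the word does not act trivially.
-/

namespace FreeGroup

variable {G X α : Type*} [Group G] [MulAction G X]

theorem lift_mk_smul_mem_of_isReduced (g : α → G) (A R : α × Bool → Set X)
    (hmaps : ∀ p, ∀ y ∉ R p, lift g (mk [p]) • y ∈ A p)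
    (hdisj : ∀ p q : α × Bool, (p.1 = q.1 → p.2 = q.2) → Disjoint (A q) (R p))
    {x₀ : X} (hx₀ : ∀ p, x₀ ∉ R p) :
    ∀ (p : α × Bool) (L : List (α × Bool)), IsReduced (p :: L) →
      lift g (mk (p :: L)) • x₀ ∈ A p := by
  intro p L hL
  induction L generalizing p with
  | nil => exact hmaps p x₀ (hx₀ p)
  | cons q L ih =>
    rw [isReduced_cons_cons] at hL
    have hq : lift g (mk (q :: L)) • x₀ ∈ A q := ih q hL.2
    rw [← List.singleton_append, ← mul_mk, _root_.map_mul, mul_smul]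
    exact hmaps p _ ((hdisj p q hL.1).notMem_of_mem_left hq)

theorem injective_lift_of_attracting_repelling (g : α → G) (A R : α × Bool → Set X)
    (hmaps : ∀ p, ∀ y ∉ R p, lift g (mk [p]) • y ∈ A p)
    (hdisj : ∀ p q : α × Bool, (p.1 = q.1 → p.2 = q.2) → Disjoint (A q) (R p))
    {x₀ : X} (hx₀A : ∀ p, x₀ ∉ A p) (hx₀R : ∀ p, x₀ ∉ R p) :
    Function.Injective (lift g) := by
  classical
  refine (injective_iff_map_eq_one _).2 fun w hw => ?_
  by_contra hw1
  obtain ⟨p, L, hpL⟩ := List.exists_cons_of_ne_nil (mt toWord_eq_nil_iff.1 hw1)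
  have hmem := lift_mk_smul_mem_of_isReduced g A R hmaps hdisj hx₀R p L
    (hpL ▸ isReduced_toWord)
  rw [← hpL, mk_toWord, hw, one_smul] at hmem
  exact hx₀A p hmem

end FreeGroup

section SignedSets

variable {X ι : Type*}

def bySign (Sp Sm : ι → Set X) (p : ι × Bool) : Set X := cond p.2 (Sp p.1) (Sm p.1)

theorem disjoint_bySign_of_ping_pong {Ap Rp Am Rm : ι → Set X}
    (ha : ∀ i, Ap i ∩ (Am i ∪ Rp i) = ∅ ∧ Am i ∩ (Ap i ∪ Rm i) = ∅)
    (hb : ∀ i j, i ≠ j →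
      (Ap i ∩ (Ap j ∪ Rp j) = ∅ ∧ Ap i ∩ (Am j ∪ Rm j) = ∅ ∧
        Am i ∩ (Ap j ∪ Rp j) = ∅ ∧ Am i ∩ (Am j ∪ Rm j) = ∅))
    (p q : ι × Bool) (hpq : p.1 = q.1 → p.2 = q.2) :
    Disjoint (bySign Ap Am q) (bySign Rp Rm p) := by
  obtain ⟨i, b⟩ := p
  obtain ⟨j, c⟩ := q
  rw [Set.disjoint_iff_inter_eq_empty]
  by_cases hij : i = j
  · subst hij
    obtain rfl : b = c := hpq rfl
    have := ha i
    cases b <;> simp_all [bySign, Set.inter_union_distrib_left]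
  · have := hb j i (Ne.symm hij)
    cases b <;> cases c <;> simp_all [bySign, Set.inter_union_distrib_left]

end SignedSets

theorem infinite_ping_pong_general
    (G : Type*) [Group G] (X : Type*) [MulAction G X]
    (ι : Type*) (g : ι → G)
    (Ap Rp Am Rm : ι → Set X)
    (ha : ∀ i, Ap i ∩ (Am i ∪ Rp i) = ∅ ∧ Am i ∩ (Ap i ∪ Rm i) = ∅)
    (hb : ∀ i j, i ≠ j →
      (Ap i ∩ (Ap j ∪ Rp j) = ∅ ∧ Ap i ∩ (Am j ∪ Rm j) = ∅ ∧
        Am i ∩ (Ap j ∪ Rp j) = ∅ ∧ Am i ∩ (Am j ∪ Rm j) = ∅))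
    (hc : ∀ i, (∀ x ∉ Rp i, g i • x ∈ Ap i) ∧ (∀ x ∉ Rm i, (g i)⁻¹ • x ∈ Am i))
    (hout : ∃ x : X, ∀ i, x ∉ Ap i ∪ Rp i ∪ Am i ∪ Rm i) :
    Function.Injective (FreeGroup.lift g) := by
  obtain ⟨x₀, hx₀⟩ := hout
  refine FreeGroup.injective_lift_of_attracting_repelling g (bySign Ap Am) (bySign Rp Rm)
    ?_ (disjoint_bySign_of_ping_pong ha hb) (x₀ := x₀) ?_ ?_
  · rintro ⟨i, _ | _⟩ y hy
    · simpa [bySign, FreeGroup.lift_mk] using (hc i).2 y hy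
    · simpa [bySign, FreeGroup.lift_mk] using (hc i).1 y hy
  all_goals rintro ⟨i, _ | _⟩ <;> simp_all [bySign]

/-- Infinite ping-pong lemma: a countable family of elements with pairwise
disjoint attracting/repelling sets, contracting as prescribed, and with some
point of `X` lying outside all of the sets, freely generates a free subgroup. -/
theorem infinite_ping_pong
    (G : Type*) [Group G] (X : Type*) [MulAction G X]
    (ι : Type*) [Countable ι] (g : ι → G)
    (Ap Rp Am Rm : ι → Set X)
    (ha : ∀ i, Ap i ∩ (Am i ∪ Rp i) = ∅ ∧ Am i ∩ (Ap i ∪ Rm i) = ∅)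
    (hb : ∀ i j, i ≠ j →
      (Ap i ∩ (Ap j ∪ Rp j) = ∅ ∧ Ap i ∩ (Am j ∪ Rm j) = ∅ ∧
        Am i ∩ (Ap j ∪ Rp j) = ∅ ∧ Am i ∩ (Am j ∪ Rm j) = ∅))
    (hc : ∀ i, (∀ x ∉ Rp i, g i • x ∈ Ap i) ∧ (∀ x ∉ Rm i, (g i)⁻¹ • x ∈ Am i))
    (hout : ∃ x : X, ∀ i, x ∉ Ap i ∪ Rp i ∪ Am i ∪ Rm i) :
    Function.Injective (FreeGroup.lift g) :=
  infinite_ping_pong_general G X ι g Ap Rp Am Rm ha hb hc hout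
end
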